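/- Unicity of ownership: in a reference-consistent heap, among all aliases to a given object, at most one alias has an owning type (i.e., a mode that is Owned or a state set). -/
import Mathlib


inductive Mode : Type
  | owned | unowned | shared
  | states : Finset ℕ → Mode
  deriving DecidableEq

/-- Pairwise alias compatibility: `Unowned` is compatible with everything,
`Shared` with `Shared` (and `Unowned`); owning modes only with `Unowned`. -/
def compat (m1 m2 : Mode) : Prop :=
  m1 = .unowned ∨ m2 = .unowned ∨ (m1 = .shared ∧ m2 = .shared)

def owning : Mode → Prop
  | .owned => True
  | .states _ => True
  | _ => False

theorem unicity_of_ownership (D : List Mode)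
    (hconsistent : ∀ i j : Fin D.length, i ≠ j → compat (D.get i) (D.get j)) :
    ∀ i j : Fin D.length, owning (D.get i) → owning (D.get j) → i = j := by
  intro i j hi hj
  by_contra hne
  rcases hconsistent i j hne with h | h | ⟨h1, h2⟩
  · rw [h] at hi; exact hi
  · rw [h] at hj; exact hj
  · rw [h1] at hi; exact hi
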